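/- arXiv:2504.02656 — 2 statements merged into one kernel-verified Lean document; each statement's English description precedes it below -/
import Mathlib

section
/- Let K ⊂ ℝ² be a convex body (compact, convex, with nonempty interior) and suppose there is a unit vector u with h_K(u) + h_K(−u) = w(K) such that K is spiky in direction u. Then for every ε ∈ (0,1) there exists y ∈ ℝ² with ε·K + y ⊂ int K such that the annulus K \ (ε·K + y) can be covered by a finite family of planks whose total width is strictly less than w(K). -/
open Set Metric Pointwise RealInnerProductSpace MeasureTheory

noncomputable section

/-- A plank in `ℝ^d`: the region between two parallel hyperplanes, of width `w`. -/
def IsPlank {d : ℕ} (P : Set (EuclideanSpace ℝ (Fin d))) (w : ℝ) : Prop :=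
  ∃ (u : EuclideanSpace ℝ (Fin d)) (a b : ℝ), ‖u‖ = 1 ∧ a ≤ b ∧ w = b - a ∧
    P = {x | a ≤ ⟪x, u⟫ ∧ ⟪x, u⟫ ≤ b}

/-- The support function of a set. -/
def suppFn {d : ℕ} (K : Set (EuclideanSpace ℝ (Fin d))) (u : EuclideanSpace ℝ (Fin d)) : ℝ :=
  sSup ((fun x => ⟪x, u⟫) '' K)

/-- The minimal width of a set: the minimum of `h_K(u) + h_K(-u)` over unit vectors `u`. -/
def minWidth {d : ℕ} (K : Set (EuclideanSpace ℝ (Fin d))) : ℝ :=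
  sInf {w | ∃ u : EuclideanSpace ℝ (Fin d), ‖u‖ = 1 ∧ w = suppFn K u + suppFn K (-u)}

/-- The supporting hyperplane of `K` with outer normal `u`. -/
def suppHyp {d : ℕ} (K : Set (EuclideanSpace ℝ (Fin d))) (u : EuclideanSpace ℝ (Fin d)) :
    Set (EuclideanSpace ℝ (Fin d)) :=
  {x | ⟪x, u⟫ = suppFn K u}

/-- The tangent cone of `K` at a point `x`:
`closure {x + α (y - x) : y ∈ K, α ≥ 0}`. -/
def tangentConeOf {d : ℕ} (K : Set (EuclideanSpace ℝ (Fin d))) (x : EuclideanSpace ℝ (Fin d)) :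
    Set (EuclideanSpace ℝ (Fin d)) :=
  closure {z | ∃ y ∈ K, ∃ α : ℝ, 0 ≤ α ∧ z = x + α • (y - x)}

/-- `K` is spiky in direction `u`: `K ∩ H_K(u)` is a single point `x` at which
`T_K(x) ∩ H_K(u) = {x}`. -/
def IsSpiky {d : ℕ} (K : Set (EuclideanSpace ℝ (Fin d))) (u : EuclideanSpace ℝ (Fin d)) : Prop :=
  ∃ x, K ∩ suppHyp K u = {x} ∧ tangentConeOf K x ∩ suppHyp K u = {x}

/-!
Let `p` be the spike point and `h = h_K(u)`. Spikiness makes `‖x - p‖ ≤ C (h - ⟪x, u⟫)` on `K`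
(compactness of the unit tangent directions at `p`), so the cap `{x ∈ K | h - g < ⟪x, u⟫}` lies
within `C g` of `p`, and the rest of `K` is covered by a plank of width `w(K) - g`.
Take `y = (1 - ε) q` with `q ∈ int K` very close to `p`. A point `x` of the cap outside
`ε K + y` is separated from it by a unit vector `n`; as `ε K + y` contains `ε p + y ≈ p` and
`x ≈ p`, the vector `n` is an approximate outer normal of `K` at `p`, hence (compactness again)
close to a true unit normal `m`, and `⟪p - x, m⟫ ≤ g / 3`. In the plane the normal cone at `p`,
which is pointed because `K` has interior points, is spanned by two unit normals `m₁`, `m₂`;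
expanding `m` in them gives `⟪p - x, mᵢ⟫ ≤ g / 3` for some `i`. So two planks of width `g / 3`
cover the cap part of the annulus, and the total width is `w(K) - g / 3`.
-/

open Module

lemma IsCompact.exists_pos_inter_eq_empty {X : Type*} [TopologicalSpace X] {s : Set X}
    (hs : IsCompact s) {F : ℝ → Set X} (hF : ∀ c, IsClosed (F c)) (hmono : Monotone F)
    (h : ∀ x ∈ s, ∃ c > 0, x ∉ F c) : ∃ c > 0, s ∩ F c = ∅ := by
  have hempty : s ∩ ⋂ k : ℕ, F (1 / (k + 1)) = ∅ := by
    refine eq_empty_of_forall_notMem fun x ⟨hx, hxF⟩ => ?_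
    obtain ⟨c, hc, hxc⟩ := h x hx
    obtain ⟨k, hk⟩ := exists_nat_one_div_lt hc
    exact hxc (hmono hk.le (mem_iInter.1 hxF k))
  obtain ⟨k, hk⟩ := hs.elim_directed_family_closed _ (fun k => hF _) hempty
    (Antitone.directed_ge fun i j hij => hmono (by gcongr))
  exact ⟨_, Nat.one_div_pos_of_nat, hk⟩

section InnerProductSpace

variable {E : Type*} [NormedAddCommGroup E] [InnerProductSpace ℝ E]

def normalCone (K : Set E) (p : E) : Set E := {n | ∀ x ∈ K, ⟪x - p, n⟫ ≤ 0}

lemma isClosed_normalCone (K : Set E) (p : E) : IsClosed (normalCone K p) := by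
  simp only [normalCone, ofPred_forall]
  exact isClosed_biInter fun x _ =>
    isClosed_le (continuous_const.inner continuous_id) continuous_const

lemma smul_mem_normalCone {K : Set E} {p n : E} (hn : n ∈ normalCone K p) {c : ℝ} (hc : 0 ≤ c) :
    c • n ∈ normalCone K p := fun x hx => by
  rw [real_inner_smul_right]
  exact mul_nonpos_of_nonneg_of_nonpos hc (hn x hx)

lemma mul_norm_le_inner_of_mem_normalCone {K : Set E} {p z n : E} {ρ : ℝ} (hρ : 0 < ρ)
    (hball : closedBall z ρ ⊆ K) (hn : n ∈ normalCone K p) : ρ * ‖n‖ ≤ ⟪p - z, n⟫ := by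
  rcases eq_or_ne n 0 with rfl | hn0
  · simp
  have hnpos : 0 < ‖n‖ := norm_pos_iff.2 hn0
  have hx : z + (ρ / ‖n‖) • n ∈ K := hball <| by
    rw [mem_closedBall, dist_eq_norm, add_sub_cancel_left, norm_smul, Real.norm_of_nonneg
      (by positivity), div_mul_cancel₀ _ hnpos.ne']
  have := hn _ hx
  rw [show z + (ρ / ‖n‖) • n - p = -(p - z) + (ρ / ‖n‖) • n by abel, inner_add_left,
    inner_neg_left, real_inner_smul_left, real_inner_self_eq_norm_sq] at this
  have : ρ / ‖n‖ * ‖n‖ ^ 2 = ρ * ‖n‖ := by field_simp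
  linarith

lemma exists_pos_near_normalCone_of_forall_inner_le [ProperSpace E] (K : Set E) (p : E)
    {δ : ℝ} (hδ : 0 < δ) :
    ∃ δ₀ > 0, ∀ n : E, ‖n‖ = 1 → (∀ x ∈ K, ⟪x - p, n⟫ ≤ δ₀) →
      ∃ m ∈ normalCone K p, ‖m‖ = 1 ∧ ‖n - m‖ < δ := by
  set far := ⋂ m ∈ normalCone K p ∩ sphere 0 1, {n : E | δ ≤ ‖n - m‖}
  have hfar : IsClosed far := isClosed_biInter fun m _ =>
    isClosed_le continuous_const (continuous_id.sub continuous_const).norm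
  have hnormal : ∀ n ∈ sphere (0 : E) 1 ∩ far, ∃ c > 0, ∃ x ∈ K, c < ⟪x - p, n⟫ := by
    rintro n ⟨hn, hnfar⟩
    have hnN : n ∉ normalCone K p := fun hN => by
      have : δ ≤ ‖n - n‖ := mem_iInter₂.1 hnfar n ⟨hN, hn⟩
      simp only [sub_self, norm_zero] at this
      linarith
    simp only [normalCone, mem_ofPred_eq, not_forall, not_le] at hnN
    obtain ⟨x, hx, hpos⟩ := hnN
    exact ⟨_, half_pos hpos, x, hx, half_lt_self hpos⟩
  obtain ⟨δ₀, hδ₀, hempty⟩ :=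
    ((isCompact_sphere (0 : E) 1).inter_right hfar).exists_pos_inter_eq_empty
      (F := fun c => {n | ∀ x ∈ K, ⟪x - p, n⟫ ≤ c})
      (fun c => by
        simp only [ofPred_forall]
        exact isClosed_biInter fun x _ =>
          isClosed_le (continuous_const.inner continuous_id) continuous_const)
      (fun c c' hc n hn x hx => (hn x hx).trans hc)
      (fun n hn => (hnormal n hn).imp fun c ⟨hc, x, hx, hlt⟩ => ⟨hc, fun h => (h x hx).not_gt hlt⟩)
  refine ⟨δ₀, hδ₀, fun n hn happrox => ?_⟩
  by_contra! hnfar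
  refine hempty.subset ⟨⟨mem_sphere_zero_iff_norm.2 hn, mem_iInter₂.2 fun m hm => ?_⟩, happrox⟩
  exact hnfar m hm.1 (mem_sphere_zero_iff_norm.1 hm.2)

lemma exists_unit_inner_le_of_notMem [CompleteSpace E] {S : Set E} (hSconv : Convex ℝ S)
    (hSc : IsClosed S) (hSne : S.Nonempty) {x : E} (hx : x ∉ S) :
    ∃ n : E, ‖n‖ = 1 ∧ ∀ s ∈ S, ⟪s, n⟫ ≤ ⟪x, n⟫ := by
  obtain ⟨f, t, hfS, hfx⟩ := geometric_hahn_banach_closed_point hSconv hSc hx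
  set z := (InnerProductSpace.toDual ℝ E).symm f
  have hz (v : E) : ⟪v, z⟫ = f v := by
    rw [real_inner_comm]; exact InnerProductSpace.toDual_symm_apply
  obtain ⟨s₀, hs₀⟩ := hSne
  have hz0 : z ≠ 0 := fun h => by
    have h₁ := hz s₀
    have h₂ := hz x
    simp only [h, inner_zero_right] at h₁ h₂
    linarith [hfS s₀ hs₀]
  refine ⟨‖z‖⁻¹ • z, by simp [norm_smul, hz0], fun s hs => ?_⟩
  rw [real_inner_smul_right, real_inner_smul_right, hz, hz]
  gcongr
  linarith [hfS s hs]

lemma smul_add_singleton_subset_interior {K : Set E} (hK : Convex ℝ K) {q : E}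
    (hq : q ∈ interior K) {ε : ℝ} (hε₀ : 0 ≤ ε) (hε₁ : ε < 1) :
    ε • K + {(1 - ε) • q} ⊆ interior K := by
  rintro _ ⟨_, ⟨x, hx, rfl⟩, _, rfl, rfl⟩
  simpa only [add_comm] using
    hK.combo_interior_closure_mem_interior hq (subset_closure hx) (by linarith) hε₀ (by ring)

lemma exists_unit_inner_le_of_notMem_smul_add [CompleteSpace E] {K : Set E} (hK : IsCompact K)
    (hKconv : Convex ℝ K) {p x y : E} (hp : p ∈ K) {ε r η : ℝ} (hxp : ‖x - p‖ ≤ r)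
    (hy : ‖y - (1 - ε) • p‖ ≤ η) (hx : x ∉ ε • K + {y}) :
    ∃ n : E, ‖n‖ = 1 ∧ ⟪p - x, n⟫ ≤ η ∧ ∀ x' ∈ K, ε * ⟪x' - p, n⟫ ≤ r + η := by
  obtain ⟨n, hn, hsep⟩ := exists_unit_inner_le_of_notMem ((hKconv.smul ε).add (convex_singleton y))
    ((hK.smul ε).add isCompact_singleton).isClosed
    ⟨ε • p + y, add_mem_add (smul_mem_smul_set hp) rfl⟩ hx
  have key (x' : E) (hx' : x' ∈ K) : ε * ⟪x' - p, n⟫ + ⟪y - (1 - ε) • p, n⟫ ≤ ⟪x - p, n⟫ := by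
    have := hsep _ (add_mem_add (smul_mem_smul_set hx') rfl : ε • x' + y ∈ ε • K + {y})
    simp only [inner_add_left, inner_sub_left, real_inner_smul_left] at this ⊢
    linarith
  have hyn : |⟪y - (1 - ε) • p, n⟫| ≤ η :=
    (abs_real_inner_le_norm _ _).trans (by rwa [hn, mul_one])
  have hxn : ⟪x - p, n⟫ ≤ r := (real_inner_le_norm _ _).trans (by rwa [hn, mul_one])
  refine ⟨n, hn, ?_, fun x' hx' => by linarith [key x' hx', abs_le.1 hyn]⟩
  have := key p hp
  rw [sub_self, inner_zero_left, mul_zero, zero_add] at this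
  rw [← neg_sub, inner_neg_left]
  linarith [abs_le.1 hyn]

lemma exists_mem_normalCone_inner_le_of_notMem_smul_add [CompleteSpace E] {K : Set E}
    (hK : IsCompact K) (hKconv : Convex ℝ K) {p x y : E} (hp : p ∈ K) {ε r η δ δ₀ : ℝ}
    (hε : 0 < ε) (happrox : ∀ n : E, ‖n‖ = 1 → (∀ x ∈ K, ⟪x - p, n⟫ ≤ δ₀) →
      ∃ m ∈ normalCone K p, ‖m‖ = 1 ∧ ‖n - m‖ < δ)
    (hrη : r + η ≤ ε * δ₀) (hxp : ‖x - p‖ ≤ r) (hy : ‖y - (1 - ε) • p‖ ≤ η)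
    (hx : x ∉ ε • K + {y}) :
    ∃ m ∈ normalCone K p, ‖m‖ = 1 ∧ ⟪p - x, m⟫ ≤ η + r * δ := by
  obtain ⟨n, hn, hxn, hKn⟩ := exists_unit_inner_le_of_notMem_smul_add hK hKconv hp hxp hy hx
  obtain ⟨m, hmN, hm, hnm⟩ := happrox n hn fun x' hx' =>
    le_of_mul_le_mul_left ((hKn x' hx').trans hrη) hε
  refine ⟨m, hmN, hm, ?_⟩
  have : ⟪p - x, m - n⟫ ≤ r * δ := (real_inner_le_norm _ _).trans <| by
    rw [norm_sub_rev p, norm_sub_rev m]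
    exact mul_le_mul hxp hnm.le (norm_nonneg _) ((norm_nonneg _).trans hxp)
  rw [inner_sub_right] at this
  linarith

lemma exists_unit_generators_of_isCompact_preimage {N : Set E}
    (hsmul : ∀ n ∈ N, ∀ c : ℝ, 0 ≤ c → c • n ∈ N) (f : ℝ →ᵃ[ℝ] E)
    (hT : IsCompact (f ⁻¹' N)) (hne : (f ⁻¹' N).Nonempty) (hf : ∀ t ∈ f ⁻¹' N, f t ≠ 0)
    (hray : ∀ n ∈ N, n ≠ 0 → ∃ t ∈ f ⁻¹' N, ∃ c : ℝ, 0 ≤ c ∧ n = c • f t) :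
    ∃ m₁ ∈ N, ∃ m₂ ∈ N, ‖m₁‖ = 1 ∧ ‖m₂‖ = 1 ∧
      ∀ n ∈ N, ∃ c₁ c₂ : ℝ, 0 ≤ c₁ ∧ 0 ≤ c₂ ∧ n = c₁ • m₁ + c₂ • m₂ := by
  set T := f ⁻¹' N
  have hunit (t : ℝ) (ht : t ∈ T) : ∃ m ∈ N, ‖m‖ = 1 ∧ f t = ‖f t‖ • m :=
    ⟨‖f t‖⁻¹ • f t, hsmul _ ht _ (by positivity), by simp [norm_smul, hf t ht],
      (smul_inv_smul₀ (norm_ne_zero_iff.2 (hf t ht)) _).symm⟩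
  obtain ⟨m₁, hm₁N, hm₁, hfm₁⟩ := hunit _ (hT.sInf_mem hne)
  obtain ⟨m₂, hm₂N, hm₂, hfm₂⟩ := hunit _ (hT.sSup_mem hne)
  refine ⟨m₁, hm₁N, m₂, hm₂N, hm₁, hm₂, fun n hn => ?_⟩
  rcases eq_or_ne n 0 with rfl | hn0
  · exact ⟨0, 0, le_rfl, le_rfl, by simp⟩
  obtain ⟨t, ht, c, hc, rfl⟩ := hray n hn hn0
  obtain ⟨σ, ⟨hσ₀, hσ₁⟩, rfl⟩ : t ∈ AffineMap.lineMap (sInf T) (sSup T) '' Icc (0 : ℝ) 1 := by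
    have := csInf_le hT.bddBelow ht
    have := le_csSup hT.bddAbove ht
    rw [← segment_eq_image_lineMap ℝ, segment_eq_Icc (by linarith)]
    exact ⟨by linarith, by linarith⟩
  refine ⟨c * (1 - σ) * ‖f (sInf T)‖, c * σ * ‖f (sSup T)‖,
    mul_nonneg (mul_nonneg hc (by linarith)) (norm_nonneg _), by positivity, ?_⟩
  rw [AffineMap.apply_lineMap, AffineMap.lineMap_apply_module]
  nth_rw 1 [hfm₁, hfm₂]
  module

def plank (m : E) (a b : ℝ) : Set E := {x | a ≤ ⟪x, m⟫ ∧ ⟪x, m⟫ ≤ b}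

lemma mem_plank_union_of_inner_add_le {K : Set E} {p x m₁ m₂ : E} (hx : x ∈ K)
    (hm₁N : m₁ ∈ normalCone K p) (hm₂N : m₂ ∈ normalCone K p) (hm₁ : ‖m₁‖ = 1) (hm₂ : ‖m₂‖ = 1)
    {c₁ c₂ : ℝ} (hc₁ : 0 ≤ c₁) (hc₂ : 0 ≤ c₂) (hm : ‖c₁ • m₁ + c₂ • m₂‖ = 1) {w : ℝ}
    (hxw : ⟪p - x, c₁ • m₁ + c₂ • m₂⟫ ≤ w) :
    x ∈ plank m₁ (⟪p, m₁⟫ - w) ⟪p, m₁⟫ ∪ plank m₂ (⟪p, m₂⟫ - w) ⟪p, m₂⟫ := by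
  have hc : 1 ≤ c₁ + c₂ := by
    have := norm_add_le (c₁ • m₁) (c₂ • m₂)
    rwa [hm, norm_smul, norm_smul, hm₁, hm₂, Real.norm_of_nonneg hc₁,
      Real.norm_of_nonneg hc₂, mul_one, mul_one] at this
  have h₁ : 0 ≤ ⟪p - x, m₁⟫ := by rw [← neg_sub, inner_neg_left]; linarith [hm₁N x hx]
  have h₂ : 0 ≤ ⟪p - x, m₂⟫ := by rw [← neg_sub, inner_neg_left]; linarith [hm₂N x hx]
  rw [inner_add_right, real_inner_smul_right, real_inner_smul_right] at hxw
  have hmin : min ⟪p - x, m₁⟫ ⟪p - x, m₂⟫ ≤ w := by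
    nlinarith [min_le_left ⟪p - x, m₁⟫ ⟪p - x, m₂⟫, min_le_right ⟪p - x, m₁⟫ ⟪p - x, m₂⟫,
      le_min h₁ h₂]
  simp only [plank, mem_union, mem_ofPred_eq]
  simp only [inner_sub_left] at h₁ h₂ hmin
  rcases min_le_iff.1 hmin with h | h
  · exact Or.inl ⟨by linarith, by linarith⟩
  · exact Or.inr ⟨by linarith, by linarith⟩

end InnerProductSpace

section TwoDim

variable {E : Type*} [NormedAddCommGroup E] [InnerProductSpace ℝ E] [Fact (finrank ℝ E = 2)]

lemma Orientation.sq_norm_smul_eq (o : Orientation ℝ E (Fin 2)) (a x : E) :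
    ‖a‖ ^ 2 • x = ⟪a, x⟫ • a + ⟪o.rightAngleRotation a, x⟫ • o.rightAngleRotation a := by
  refine ext_inner_right ℝ fun y => ?_
  simp only [inner_add_left, real_inner_smul_left, o.inner_rightAngleRotation_left]
  rw [← o.inner_mul_inner_add_areaForm_mul_areaForm a x y]

lemma exists_unit_generators_of_norm_le_inner {N : Set E} (hN : IsClosed N)
    (hsmul : ∀ n ∈ N, ∀ c : ℝ, 0 ≤ c → c • n ∈ N) {a : E} (ha : ∀ n ∈ N, ‖n‖ ≤ ⟪a, n⟫)
    {n₀ : E} (hn₀ : n₀ ∈ N) (hn₀0 : n₀ ≠ 0) :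
    ∃ m₁ ∈ N, ∃ m₂ ∈ N, ‖m₁‖ = 1 ∧ ‖m₂‖ = 1 ∧
      ∀ n ∈ N, ∃ c₁ c₂ : ℝ, 0 ≤ c₁ ∧ 0 ≤ c₂ ∧ n = c₁ • m₁ + c₂ • m₂ := by
  have : FiniteDimensional ℝ E := .of_fact_finrank_eq_two
  obtain ⟨o⟩ : Nonempty (Orientation ℝ E (Fin 2)) :=
    ⟨(finBasisOfFinrankEq ℝ E Fact.out).orientation⟩
  set b := o.rightAngleRotation a
  have hab : ⟪a, b⟫ = 0 := by rw [real_inner_comm]; exact o.inner_rightAngleRotation_self a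
  have ha_pos : 0 < ‖a‖ := by
    have h₁ := (ha n₀ hn₀).trans (real_inner_le_norm a n₀)
    have h₂ : 0 < ‖n₀‖ := norm_pos_iff.2 hn₀0
    nlinarith
  -- slice the cone by the line `t ↦ a + t • b`, on which `⟪a, ·⟫ = ‖a‖ ^ 2`
  let f : ℝ →ᵃ[ℝ] E := AffineMap.lineMap a (a + b)
  have hf (t : ℝ) : f t = a + t • b := by
    simp only [f, AffineMap.lineMap_apply_module, sub_smul, one_smul, smul_add]; abel
  have haf (t : ℝ) : ⟪a, f t⟫ = ‖a‖ ^ 2 := by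
    rw [hf, inner_add_right, real_inner_smul_right, hab, real_inner_self_eq_norm_sq]; ring
  have hT_bdd (t : ℝ) (ht : t ∈ f ⁻¹' N) : t ∈ Icc (-(‖a‖ + 1)) (‖a‖ + 1) := by
    have h₁ : ‖f t‖ ≤ ‖a‖ ^ 2 := haf t ▸ ha _ ht
    have h₂ : |t| * ‖a‖ ≤ ‖f t‖ + ‖a‖ :=
      calc |t| * ‖a‖ = ‖f t - a‖ := by
            rw [hf, add_sub_cancel_left, norm_smul, o.rightAngleRotation.norm_map,
              Real.norm_eq_abs]
        _ ≤ ‖f t‖ + ‖a‖ := norm_sub_le _ _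
    exact abs_le.1 (by nlinarith)
  have hslice (n : E) (hn : n ∈ N) (hn0 : n ≠ 0) :
      ∃ t ∈ f ⁻¹' N, ∃ c : ℝ, 0 ≤ c ∧ n = c • f t := by
    have hpos : 0 < ⟪a, n⟫ := (norm_pos_iff.2 hn0).trans_le (ha n hn)
    have key : ⟪a, n⟫ • f (⟪b, n⟫ / ⟪a, n⟫) = ‖a‖ ^ 2 • n := by
      rw [o.sq_norm_smul_eq, hf, smul_add, smul_smul, mul_div_cancel₀ _ hpos.ne']
    refine ⟨⟪b, n⟫ / ⟪a, n⟫, ?_, (‖a‖ ^ 2)⁻¹ * ⟪a, n⟫, by positivity, ?_⟩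
    · rw [mem_preimage, ← inv_smul_smul₀ hpos.ne' (f _), key, smul_smul]
      exact hsmul n hn _ (by positivity)
    · rw [mul_smul, key, inv_smul_smul₀ (by positivity)]
  obtain ⟨t₀, ht₀, -⟩ := hslice n₀ hn₀ hn₀0
  exact exists_unit_generators_of_isCompact_preimage hsmul f
    (isCompact_Icc.of_isClosed_subset (hN.preimage AffineMap.lineMap_continuous) hT_bdd)
    ⟨t₀, ht₀⟩ (fun t _ h => (pow_pos ha_pos 2).ne (by simpa [h] using haf t)) hslice

lemma exists_unit_generators_normalCone {K : Set E} {p z u : E} {ρ : ℝ} (hρ : 0 < ρ)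
    (hball : closedBall z ρ ⊆ K) (hu : u ∈ normalCone K p) (hu0 : u ≠ 0) :
    ∃ m₁ ∈ normalCone K p, ∃ m₂ ∈ normalCone K p, ‖m₁‖ = 1 ∧ ‖m₂‖ = 1 ∧
      ∀ n ∈ normalCone K p, ∃ c₁ c₂ : ℝ, 0 ≤ c₁ ∧ 0 ≤ c₂ ∧ n = c₁ • m₁ + c₂ • m₂ :=
  exists_unit_generators_of_norm_le_inner (isClosed_normalCone K p)
    (fun _ hn _ hc => smul_mem_normalCone hn hc) (a := ρ⁻¹ • (p - z))
    (fun n hn => by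
      rw [real_inner_smul_left, le_inv_mul_iff₀ hρ]
      exact mul_norm_le_inner_of_mem_normalCone hρ hball hn) hu hu0

theorem exists_annulus_subset_union_planks {K : Set E} (hK : IsCompact K) (hKconv : Convex ℝ K)
    (hKint : (interior K).Nonempty) {p u : E} (hp : p ∈ K) (hu : u ∈ normalCone K p)
    (hu0 : u ≠ 0) {C : ℝ} (hC : 0 < C) (hspike : ∀ x ∈ K, ‖x - p‖ ≤ C * ⟪p - x, u⟫)
    {ε : ℝ} (hε : ε ∈ Ioo 0 1) {g₀ : ℝ} (hg₀ : 0 < g₀) :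
    ∃ y, ε • K + {y} ⊆ interior K ∧ ∃ g ∈ Ioc 0 g₀, ∃ m₁ m₂ : E, ‖m₁‖ = 1 ∧ ‖m₂‖ = 1 ∧
      K \ (ε • K + {y}) ⊆ {x | ⟪x, u⟫ ≤ ⟪p, u⟫ - g} ∪
        (plank m₁ (⟪p, m₁⟫ - g / 3) ⟪p, m₁⟫ ∪ plank m₂ (⟪p, m₂⟫ - g / 3) ⟪p, m₂⟫) := by
  have : FiniteDimensional ℝ E := .of_fact_finrank_eq_two
  obtain ⟨hε₀, hε₁⟩ := hε
  obtain ⟨z, hz⟩ := hKint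
  obtain ⟨ρ, hρ, hball⟩ := nhds_basis_closedBall.mem_iff.1 (mem_interior_iff_mem_nhds.1 hz)
  obtain ⟨m₁, hm₁N, m₂, hm₂N, hm₁, hm₂, hgen⟩ := exists_unit_generators_normalCone hρ hball hu hu0
  -- `δ = 1 / (6 C)` and `η = g / 6` below make `η + (C g) δ = g / 3`
  obtain ⟨δ₀, hδ₀, happrox⟩ :=
    exists_pos_near_normalCone_of_forall_inner_le K p (δ := 1 / (6 * C)) (by positivity)
  set g := min g₀ (ε * δ₀ / (C + 1))
  have hg : 0 < g := lt_min hg₀ (by positivity)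
  have hgδ₀ : (C + 1) * g ≤ ε * δ₀ := by
    rw [mul_comm]; exact (le_div_iff₀ (by linarith)).1 (min_le_right _ _)
  obtain ⟨q, hq, hpq⟩ := Metric.mem_closure_iff.1
    (hKconv.closure_interior_eq_closure_of_nonempty_interior ⟨z, hz⟩ ▸ subset_closure hp)
    (g / 6) (by positivity)
  have hy : ‖(1 - ε) • q - (1 - ε) • p‖ ≤ g / 6 := by
    rw [← smul_sub, norm_smul, Real.norm_of_nonneg (by linarith), ← dist_eq_norm, dist_comm]
    nlinarith [dist_nonneg (x := p) (y := q)]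
  refine ⟨(1 - ε) • q, smul_add_singleton_subset_interior hKconv hq hε₀.le hε₁, g,
    ⟨hg, min_le_left _ _⟩, m₁, m₂, hm₁, hm₂, ?_⟩
  rintro x ⟨hxK, hx⟩
  by_cases hcap : ⟪x, u⟫ ≤ ⟪p, u⟫ - g
  · exact Or.inl hcap
  have hxp : ‖x - p‖ ≤ C * g :=
    (hspike x hxK).trans (by gcongr; rw [inner_sub_left]; linarith)
  obtain ⟨m, hmN, hm, hxm⟩ := exists_mem_normalCone_inner_le_of_notMem_smul_add hK hKconv hp hε₀
    happrox (by nlinarith) hxp hy hx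
  obtain ⟨c₁, c₂, hc₁, hc₂, rfl⟩ := hgen m hmN
  have : g / 6 + C * g * (1 / (6 * C)) = g / 3 := by field_simp; ring
  exact Or.inr (mem_plank_union_of_inner_add_le hxK hm₁N hm₂N hm₁ hm₂ hc₁ hc₂ hm (by linarith))

end TwoDim

section EuclideanSpace

variable {d : ℕ} {K : Set (EuclideanSpace ℝ (Fin d))}

lemma isPlank_plank {m : EuclideanSpace ℝ (Fin d)} (hm : ‖m‖ = 1) {a b : ℝ} (hab : a ≤ b) :
    IsPlank (plank m a b) (b - a) :=
  ⟨m, a, b, hm, hab, rfl, rfl⟩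

lemma inner_le_suppFn (hK : IsCompact K) (u : EuclideanSpace ℝ (Fin d))
    {x : EuclideanSpace ℝ (Fin d)} (hx : x ∈ K) : ⟪x, u⟫ ≤ suppFn K u :=
  le_csSup (hK.image (continuous_id.inner continuous_const)).bddAbove (mem_image_of_mem _ hx)

lemma suppFn_add_suppFn_neg_pos (hK : IsCompact K) (hKint : (interior K).Nonempty)
    {u : EuclideanSpace ℝ (Fin d)} (hu : ‖u‖ = 1) : 0 < suppFn K u + suppFn K (-u) := by
  obtain ⟨z, hz⟩ := hKint
  obtain ⟨ρ, hρ, hball⟩ := nhds_basis_closedBall.mem_iff.1 (mem_interior_iff_mem_nhds.1 hz)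
  have h₁ := inner_le_suppFn hK u (hball (show z + ρ • u ∈ closedBall z ρ by
    simp [norm_smul, hu, abs_of_pos hρ]))
  have h₂ := inner_le_suppFn hK (-u) (interior_subset hz)
  rw [inner_add_left, real_inner_smul_left, real_inner_self_eq_norm_sq, hu] at h₁
  rw [inner_neg_right] at h₂
  linarith

variable {p u : EuclideanSpace ℝ (Fin d)}

lemma tangentConeOf_subset_of_mem_normalCone (hu : u ∈ normalCone K p) :
    tangentConeOf K p ⊆ {z | ⟪z, u⟫ ≤ ⟪p, u⟫} := by
  refine closure_minimal ?_ (isClosed_le (continuous_id.inner continuous_const) continuous_const)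
  rintro _ ⟨y, hy, α, hα, rfl⟩
  simp only [mem_ofPred_eq, inner_add_left, real_inner_smul_left]
  nlinarith [hu y hy]

lemma exists_norm_sub_le_mul_inner_of_tangentConeOf (hu : u ∈ normalCone K p)
    (hT : tangentConeOf K p ∩ {z | ⟪z, u⟫ = ⟪p, u⟫} ⊆ {p}) :
    ∃ C > 0, ∀ x ∈ K, ‖x - p‖ ≤ C * ⟪p - x, u⟫ := by
  -- every unit tangent direction `v` at `p` has `⟪v, u⟫ < 0`; compactness of the sphere
  -- makes this uniform
  have hD (v) (hv : v ∈ sphere (0 : EuclideanSpace ℝ (Fin d)) 1) :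
      ∃ c > 0, ¬(p + v ∈ tangentConeOf K p ∧ -c ≤ ⟪v, u⟫) := by
    by_cases hvT : p + v ∈ tangentConeOf K p
    · have hle : ⟪v, u⟫ ≤ 0 := by
        have := tangentConeOf_subset_of_mem_normalCone hu hvT
        rw [mem_ofPred_eq, inner_add_left] at this
        linarith
      have hne : ⟪v, u⟫ ≠ 0 := fun h0 => by
        have := hT ⟨hvT, by rw [mem_ofPred_eq, inner_add_left, h0, add_zero]⟩
        rw [mem_singleton_iff, add_eq_left] at this
        simp [this] at hv
      have hlt := lt_of_le_of_ne hle hne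
      exact ⟨-⟪v, u⟫ / 2, by linarith, fun h => by linarith [h.2]⟩
    · exact ⟨1, one_pos, fun h => hvT h.1⟩
  obtain ⟨c, hc, hempty⟩ :=
    (isCompact_sphere (0 : EuclideanSpace ℝ (Fin d)) 1).exists_pos_inter_eq_empty
    (F := fun c => (p + ·) ⁻¹' tangentConeOf K p ∩ {v | -c ≤ ⟪v, u⟫})
    (fun c => (isClosed_closure.preimage (continuous_const.add continuous_id)).inter
      (isClosed_le continuous_const (continuous_id.inner continuous_const)))
    (fun c c' hcc' v hv => ⟨hv.1, le_trans (neg_le_neg hcc') hv.2⟩) hD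
  refine ⟨c⁻¹, inv_pos.2 hc, fun x hx => ?_⟩
  rcases eq_or_ne x p with rfl | hxp
  · simp
  have hxp' : 0 < ‖x - p‖ := norm_pos_iff.2 (sub_ne_zero.2 hxp)
  have hv : ⟪‖x - p‖⁻¹ • (x - p), u⟫ < -c := by
    by_contra! h
    refine hempty.subset ⟨by simp [norm_smul, hxp'.ne'], subset_closure ?_, h⟩
    exact ⟨x, hx, _, inv_nonneg.2 hxp'.le, rfl⟩
  rw [real_inner_smul_left, inv_mul_lt_iff₀ hxp', ← neg_sub p x, inner_neg_left, neg_sub] at hv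
  rw [le_inv_mul_iff₀ hc]
  linarith

end EuclideanSpace

/-- a planar convex body which is spiky in a minimal width direction admits,
for every `ε ∈ (0,1)`, a placement of `ε • K` inside `int K` so that the annulus can be
covered by finitely many planks of total width `< w(K)`. -/
theorem spiky_annulus_dim_two (K : Set (EuclideanSpace ℝ (Fin 2)))
    (hKc : IsCompact K) (hKconv : Convex ℝ K) (hKint : (interior K).Nonempty)
    (u : EuclideanSpace ℝ (Fin 2)) (hu : ‖u‖ = 1)
    (hmin : suppFn K u + suppFn K (-u) = minWidth K)
    (hspiky : IsSpiky K u)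
    (ε : ℝ) (hε : ε ∈ Set.Ioo (0 : ℝ) 1) :
    ∃ y : EuclideanSpace ℝ (Fin 2),
      ε • K + {y} ⊆ interior K ∧
      ∃ (n : ℕ) (P : Fin n → Set (EuclideanSpace ℝ (Fin 2))) (w : Fin n → ℝ),
        (∀ i, IsPlank (P i) (w i)) ∧
        (K \ (ε • K + {y}) ⊆ ⋃ i, P i) ∧
        ∑ i, w i < minWidth K := by
  have : Fact (Module.finrank ℝ (EuclideanSpace ℝ (Fin 2)) = 2) := ⟨finrank_euclideanSpace_fin⟩
  obtain ⟨p, hpH, hT⟩ := hspiky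
  obtain ⟨hpK, hpu⟩ : p ∈ K ∧ ⟪p, u⟫ = suppFn K u := (hpH ▸ rfl : p ∈ K ∩ suppHyp K u)
  have hu_normal : u ∈ normalCone K p := fun x hx => by
    rw [inner_sub_left]; linarith [inner_le_suppFn hKc u hx, hpu.symm.le]
  obtain ⟨C, hC, hspike⟩ := exists_norm_sub_le_mul_inner_of_tangentConeOf hu_normal
    (by rw [← hT, suppHyp, ← hpu])
  obtain ⟨y, hy, g, ⟨hg, hgw⟩, m₁, m₂, hm₁, hm₂, hcover⟩ := exists_annulus_subset_union_planks hKc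
    hKconv hKint hpK hu_normal (norm_ne_zero_iff.1 (hu ▸ one_ne_zero)) hC hspike hε
    (suppFn_add_suppFn_neg_pos hKc hKint hu)
  refine ⟨y, hy, 3, ![plank u (-suppFn K (-u)) (⟪p, u⟫ - g), plank m₁ (⟪p, m₁⟫ - g / 3) ⟪p, m₁⟫,
    plank m₂ (⟪p, m₂⟫ - g / 3) ⟪p, m₂⟫], ![⟪p, u⟫ - g + suppFn K (-u), g / 3, g / 3], ?_, ?_, ?_⟩
  · intro i
    fin_cases i
    · simpa using isPlank_plank hu (a := -suppFn K (-u)) (b := ⟪p, u⟫ - g) (by linarith)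
    · simpa using isPlank_plank hm₁ (a := ⟪p, m₁⟫ - g / 3) (b := ⟪p, m₁⟫) (by linarith)
    · simpa using isPlank_plank hm₂ (a := ⟪p, m₂⟫ - g / 3) (b := ⟪p, m₂⟫) (by linarith)
  · intro x hx
    simp only [mem_iUnion, Fin.exists_fin_succ, Fin.exists_fin_zero]
    rcases hcover hx with h | h | h
    · refine Or.inl ⟨?_, h⟩
      have := inner_le_suppFn hKc (-u) hx.1
      rw [inner_neg_right] at this
      linarith
    · exact Or.inr (Or.inl h)
    · exact Or.inr (Or.inr (Or.inl h))
  · simp only [← hmin, Fin.sum_univ_three, Matrix.cons_val]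
    linarith

end
end

section
/- Let n ≥ 4 be an integer, let δ > 0 and ρ > 0 be real numbers, and let α_1, …, α_n ∈ (0, π) satisfy α_1 + ⋯ + α_n ≤ 2π and δ/sin(α_1) + ⋯ + δ/sin(α_n) ≤ ρ. Then n < √(2πρ/δ). -/
open Set Metric Pointwise RealInnerProductSpace MeasureTheory

noncomputable section

/-- the arithmetic core of the counting argument. If `n ≥ 4`,
`α_1, …, α_n ∈ (0, π)` with `∑ α_i ≤ 2π` and `∑ δ / sin α_i ≤ ρ`, then `n < √(2πρ/δ)`. -/
theorem counting_bound (n : ℕ) (hn : 4 ≤ n) (δ ρ : ℝ) (hδ : 0 < δ) (hρ : 0 < ρ)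
    (α : Fin n → ℝ) (hα : ∀ i, α i ∈ Set.Ioo (0 : ℝ) Real.pi)
    (hsum : ∑ i, α i ≤ 2 * Real.pi)
    (hsin : ∑ i, δ / Real.sin (α i) ≤ ρ) :
    (n : ℝ) < Real.sqrt (2 * Real.pi * ρ / δ) := by
  have hne : (Finset.univ : Finset (Fin n)).Nonempty := by
    have : 0 < n := by omega
    exact Finset.univ_nonempty_iff.mpr (Fin.pos_iff_nonempty.mp this)
  have hαpos : ∀ i, 0 < α i := fun i => (hα i).1
  have hpi := Real.pi_pos
  have hSpos : 0 < ∑ i, α i := Finset.sum_pos (fun i _ => hαpos i) hne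
  have hstrict : ∑ i, δ / α i < ∑ i, δ / Real.sin (α i) := by
    refine Finset.sum_lt_sum_of_nonempty hne fun i _ => ?_
    have hs : Real.sin (α i) < α i := Real.sin_lt (hαpos i)
    have hsp : 0 < Real.sin (α i) := Real.sin_pos_of_pos_of_lt_pi (hαpos i) (hα i).2
    exact div_lt_div_of_pos_left hδ hsp hs
  have hcs : (n : ℝ) ^ 2 / (∑ i, α i) ≤ ∑ i, 1 / α i := by
    have := Finset.sq_sum_div_le_sum_sq_div (Finset.univ : Finset (Fin n))
      (fun _ => (1 : ℝ)) (g := α) (fun i _ => hαpos i)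
    simpa using this
  have h1 : (n : ℝ) ^ 2 / (2 * Real.pi) ≤ ∑ i, 1 / α i := by
    refine le_trans ?_ hcs
    exact div_le_div_of_nonneg_left (by positivity) hSpos hsum
  have h2 : δ * ((n : ℝ) ^ 2 / (2 * Real.pi)) ≤ ∑ i, δ / α i := by
    have : ∑ i, δ / α i = δ * ∑ i, 1 / α i := by
      rw [Finset.mul_sum]; congr 1; ext i; rw [mul_one_div]
    rw [this]
    exact mul_le_mul_of_nonneg_left h1 hδ.le
  have hlt : δ * ((n : ℝ) ^ 2 / (2 * Real.pi)) < ρ :=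
    lt_of_le_of_lt h2 (lt_of_lt_of_le hstrict hsin)
  rw [Real.lt_sqrt (by positivity), lt_div_iff₀ hδ]
  have h2pi : (0:ℝ) < 2 * Real.pi := by positivity
  have hlt' : δ * (n : ℝ) ^ 2 / (2 * Real.pi) < ρ := by
    rw [mul_div_assoc]; exact hlt
  have := (div_lt_iff₀ h2pi).mp hlt'
  nlinarith
end
end
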